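/- Uniform convergence theorem for the RDS integral: if α ∈ BV[a,b], each f_k is RDS integrable with respect to α, and f_k → f uniformly on [a,b], then f is RDS integrable with respect to α and lim_{k→∞} ∫_a^b f_k dα = ∫_a^b f dα. -/

import Mathlib

open Set Filter Topology
open scoped Classical

noncomputable section

/-- A partition `a = x 0 < x 1 < ... < x n = b` of `[a,b]`. -/
structure RDSPartition (a b : ℝ) where
  n : ℕ
  x : ℕ → ℝ
  mono : ∀ i, i < n → x i < x (i + 1)
  first : x 0 = a
  last : x n = b

/-- Right limit `α(t+)`, with the convention `α(b+) = α(b)` at the right endpoint. -/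
def rLim (b : ℝ) (α : ℝ → ℝ) (t : ℝ) : ℝ :=
  if t < b then Function.rightLim α t else α t

/-- Left limit `α(t-)`, with the convention `α(a-) = α(a)` at the left endpoint. -/
def lLim (a : ℝ) (α : ℝ → ℝ) (t : ℝ) : ℝ :=
  if a < t then Function.leftLim α t else α t

/-- `α`-length of the singleton `{t}` inside `[a,b]`: `α(t+) - α(t-)`. -/
def muPt (a b : ℝ) (α : ℝ → ℝ) (t : ℝ) : ℝ :=
  rLim b α t - lLim a α t

/-- `α`-length of the open interval `(c,d)` inside `[a,b]`: `α(d-) - α(c+)`. -/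
def muIoo (a b : ℝ) (α : ℝ → ℝ) (c d : ℝ) : ℝ :=
  lLim a α d - rLim b α c

/-- `f` is a step function with respect to the partition `P`: it is constant on each
open subinterval `(x (i-1), x i)` of `P`. -/
def IsStepOn (a b : ℝ) (f : ℝ → ℝ) (P : RDSPartition a b) : Prop :=
  ∀ i, i < P.n → ∀ s ∈ Set.Ioo (P.x i) (P.x (i + 1)),
    f s = f ((P.x i + P.x (i + 1)) / 2)

/-- The RDS integral of a step function with respect to the partition `P`:
`Σ_{i=0}^n f(x_i) μ_α({x_i}) + Σ_{i=1}^n c_i μ_α(I_i)`. -/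
def stepInt (a b : ℝ) (α : ℝ → ℝ) (P : RDSPartition a b) (f : ℝ → ℝ) : ℝ :=
  (∑ i ∈ Finset.range (P.n + 1), f (P.x i) * muPt a b α (P.x i)) +
    ∑ i ∈ Finset.range P.n,
      f ((P.x i + P.x (i + 1)) / 2) * muIoo a b α (P.x i) (P.x (i + 1))

/-- Upper envelope: infimum of RDS step integrals of step functions above `f` on `[a,b]`. -/
def upperRDS (a b : ℝ) (α f : ℝ → ℝ) : ℝ :=
  sInf { r | ∃ (u : ℝ → ℝ) (P : RDSPartition a b), IsStepOn a b u P ∧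
    (∀ t ∈ Set.Icc a b, f t ≤ u t) ∧ r = stepInt a b α P u }

/-- Lower envelope: supremum of RDS step integrals of step functions below `f` on `[a,b]`. -/
def lowerRDS (a b : ℝ) (α f : ℝ → ℝ) : ℝ :=
  sSup { r | ∃ (v : ℝ → ℝ) (P : RDSPartition a b), IsStepOn a b v P ∧
    (∀ t ∈ Set.Icc a b, v t ≤ f t) ∧ r = stepInt a b α P v }

/-- RDS integrability with respect to an increasing integrator. -/
def RDSIntegrableInc (a b : ℝ) (α f : ℝ → ℝ) : Prop :=
  lowerRDS a b α f = upperRDS a b α f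

/-- The RDS integral with respect to an increasing integrator. -/
def RDSIntegralInc (a b : ℝ) (α f : ℝ → ℝ) : ℝ := upperRDS a b α f

/-- RDS integrability with respect to a BV integrator: some Jordan decomposition
into increasing functions works. -/
def RDSIntegrable (a b : ℝ) (α f : ℝ → ℝ) : Prop :=
  ∃ αp αm : ℝ → ℝ, MonotoneOn αp (Set.Icc a b) ∧ MonotoneOn αm (Set.Icc a b) ∧
    (∀ t ∈ Set.Icc a b, α t = αp t - αm t) ∧
    RDSIntegrableInc a b αp f ∧ RDSIntegrableInc a b αm f

/-- The RDS integral with respect to a BV integrator. -/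
def RDSIntegral (a b : ℝ) (α f : ℝ → ℝ) : ℝ :=
  if h : RDSIntegrable a b α f then
    RDSIntegralInc a b h.choose f - RDSIntegralInc a b h.choose_spec.choose f
  else 0

/-- `f` is bounded on `[a,b]`. -/
def BddOn (a b : ℝ) (f : ℝ → ℝ) : Prop :=
  ∃ M : ℝ, ∀ t ∈ Set.Icc a b, |f t| ≤ M

end

/-!
For increasing `γ`, the RDS step integral of a step function is its Lebesgue integral against the
Lebesgue–Stieltjes measure `μ_γ` of `γ` on `[a, b]`, whose atoms are the jumps `γ(x+) - γ(x-)` and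
which gives `(c, d)` the mass `γ(d-) - γ(c+)`. A bounded RDS-integrable `f` is therefore squeezed
between step functions `v ≤ f ≤ u` with `∫ (u - v) dμ_γ` arbitrarily small, so it is
`μ_γ`-integrable with RDS integral `∫ f dμ_γ`. Widening a squeeze of `f_k` by `sup |f_k - g|` gives
one of `g`, and the integrals converge by dominated convergence.

For `α` of bounded variation, the decomposition `α = u - v` witnessing the integrability of `f_k`
may depend on `k`, so we pass to the canonical one `α = V - (V - α)`, `V` the variation of `α`
from `a`. Since `u + v - V` is increasing, `μ_V` and `μ_(V - α)` are dominated by `μ_u + μ_v`, and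
the pointwise `min`/`max` of squeezes for `μ_u` and `μ_v` is a squeeze for any dominated measure.
The value does not depend on the decomposition: `u - v = u' - v'` forces
`μ_u + μ_v' = μ_u' + μ_v`.
-/

open MeasureTheory

noncomputable section

section Integrals

variable {α : Type*} [MeasurableSpace α] {μ : Measure α}

theorem integrable_of_forall_exists_between {f : α → ℝ}
    (h : ∀ ε > 0, ∃ u v : α → ℝ, Integrable u μ ∧ Integrable v μ ∧ v ≤ᵐ[μ] f ∧ f ≤ᵐ[μ] u ∧
      ∫ x, (u x - v x) ∂μ < ε) : Integrable f μ := by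
  choose u v hu hv hvf hfu hlt using fun n : ℕ => h (1 / (n + 1)) Nat.one_div_pos_of_nat
  -- `f` is trapped a.e. between the measurable envelopes `V ≤ f ≤ U`, and `∫ (U - V) = 0`.
  set U := fun x => ⨅ n, u n x
  set V := fun x => ⨆ n, v n x
  have hVU : ∀ᵐ x ∂μ, V x ≤ f x ∧ f x ≤ U x ∧ ∀ n, U x ≤ u n x ∧ v n x ≤ V x := by
    filter_upwards [ae_all_iff.2 fun n => (hvf n).and (hfu n)] with x hx
    have hb : BddBelow (range fun n => u n x) := ⟨f x, forall_mem_range.2 fun n => (hx n).2⟩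
    have ha : BddAbove (range fun n => v n x) := ⟨f x, forall_mem_range.2 fun n => (hx n).1⟩
    exact ⟨ciSup_le fun n => (hx n).1, le_ciInf fun n => (hx n).2,
      fun n => ⟨ciInf_le hb n, le_ciSup ha n⟩⟩
  have hUi : Integrable U μ :=
    integrable_of_le_of_le (AEMeasurable.iInf fun n => (hu n).aemeasurable).aestronglyMeasurable
      (by filter_upwards [hVU] with x hx using (hx.2.2 0).2.trans (hx.1.trans hx.2.1))
      (by filter_upwards [hVU] with x hx using (hx.2.2 0).1) (hv 0) (hu 0)
  have hVi : Integrable V μ :=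
    integrable_of_le_of_le (AEMeasurable.iSup fun n => (hv n).aemeasurable).aestronglyMeasurable
      (by filter_upwards [hVU] with x hx using (hx.2.2 0).2)
      (by filter_upwards [hVU] with x hx using hx.1.trans (hx.2.1.trans (hx.2.2 0).1)) (hv 0) (hu 0)
  have hnonneg : 0 ≤ᵐ[μ] fun x => U x - V x := by
    filter_upwards [hVU] with x hx using sub_nonneg.2 (hx.1.trans hx.2.1)
  have hgap : ∫ x, (U x - V x) ∂μ ≤ 0 := by
    refine le_of_forall_pos_lt_add fun ε hε => ?_
    obtain ⟨n, hn⟩ := exists_nat_one_div_lt hε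
    calc ∫ x, (U x - V x) ∂μ ≤ ∫ x, (u n x - v n x) ∂μ :=
          integral_mono_ae (hUi.sub hVi) ((hu n).sub (hv n)) (by
            filter_upwards [hVU] with x hx using sub_le_sub (hx.2.2 n).1 (hx.2.2 n).2)
      _ < 0 + ε := by linarith [hlt n]
  have hUV : U =ᵐ[μ] V := by
    filter_upwards [(integral_eq_zero_iff_of_nonneg_ae hnonneg (hUi.sub hVi)).1
      (hgap.antisymm (integral_nonneg_of_ae hnonneg))] with x hx using sub_eq_zero.1 hx
  refine hUi.congr ?_
  filter_upwards [hUV, hVU] with x h₁ h₂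
  exact le_antisymm (h₁ ▸ h₂.1) h₂.2.1

theorem TendstoUniformlyOn.tendsto_setIntegral {E : Type*} [NormedAddCommGroup E]
    [NormedSpace ℝ E] [IsFiniteMeasure μ] {F : ℕ → α → E} {f : α → E} {s : Set α}
    (hs : MeasurableSet s) (hF : ∀ n, IntegrableOn (F n) s μ) (h : TendstoUniformlyOn F f atTop s) :
    Tendsto (fun n => ∫ x in s, F n x ∂μ) atTop (𝓝 (∫ x in s, f x ∂μ)) := by
  obtain ⟨N, hN⟩ := eventually_atTop.1 (Metric.tendstoUniformlyOn_iff.1 h 1 one_pos)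
  refine tendsto_integral_filter_of_dominated_convergence (fun x => ‖F N x‖ + 2)
    (.of_forall fun n => (hF n).aestronglyMeasurable) ?_ ((hF N).norm.add (integrable_const 2))
    (by filter_upwards [ae_restrict_mem hs] with x hx using h.tendsto_at hx)
  filter_upwards [eventually_ge_atTop N] with n hn
  filter_upwards [ae_restrict_mem hs] with x hx
  have h₁ := hN n hn x hx
  have h₂ := hN N le_rfl x hx
  rw [dist_eq_norm] at h₁ h₂
  calc ‖F n x‖ = ‖F N x + (f x - F N x) - (f x - F n x)‖ := by congr 1; abel
    _ ≤ ‖F N x‖ + ‖f x - F N x‖ + ‖f x - F n x‖ :=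
        (norm_sub_le _ _).trans (by grw [norm_add_le])
    _ ≤ ‖F N x‖ + 2 := by linarith

end Integrals

section Variation

lemma eVariationOn_sub_le {ι E : Type*} [LinearOrder ι] [SeminormedAddCommGroup E] (u v : ι → E)
    (s : Set ι) : eVariationOn (fun t => u t - v t) s ≤ eVariationOn u s + eVariationOn v s := by
  refine iSup_le fun ⟨n, w, hw, hws⟩ => ?_
  calc ∑ i ∈ Finset.range n, edist (u (w (i + 1)) - v (w (i + 1))) (u (w i) - v (w i))
      ≤ ∑ i ∈ Finset.range n, (edist (u (w (i + 1))) (u (w i)) + edist (v (w (i + 1))) (v (w i))) :=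
        Finset.sum_le_sum fun i _ => by
          simp only [edist_dist, ← ENNReal.ofReal_add dist_nonneg dist_nonneg]
          exact ENNReal.ofReal_le_ofReal (dist_sub_sub_le _ _ _ _)
    _ ≤ eVariationOn u s + eVariationOn v s := by
        rw [Finset.sum_add_distrib]
        exact add_le_add (eVariationOn.sum_le hw hws) (eVariationOn.sum_le hw hws)

lemma monotoneOn_add_sub_variationOnFromTo {ι : Type*} [LinearOrder ι] {s : Set ι} {x₀ : ι}
    {α u v : ι → ℝ} (hα : LocallyBoundedVariationOn α s) (hx₀ : x₀ ∈ s) (hu : MonotoneOn u s)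
    (hv : MonotoneOn v s) (h : ∀ t ∈ s, α t = u t - v t) :
    MonotoneOn (fun t => u t + v t - variationOnFromTo α s x₀ t) s := by
  intro x hx y hy hxy
  have hvar : eVariationOn α (s ∩ Icc x y) ≤
      ENNReal.ofReal (u y - u x) + ENNReal.ofReal (v y - v x) := by
    rw [eVariationOn.eq_of_eqOn fun t ht => h t ht.1, ← hu.eVariationOn_eq hx hy,
      ← hv.eVariationOn_eq hx hy]
    exact eVariationOn_sub_le u v _
  have hvar' : variationOnFromTo α s x y ≤ (u y - u x) + (v y - v x) := by
    rw [variationOnFromTo.eq_of_le α s hxy, ← ENNReal.toReal_ofReal (sub_nonneg.2 (hu hx hy hxy)),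
      ← ENNReal.toReal_ofReal (sub_nonneg.2 (hv hx hy hxy)),
      ← ENNReal.toReal_add ENNReal.ofReal_ne_top ENNReal.ofReal_ne_top]
    exact ENNReal.toReal_mono (by finiteness) hvar
  have := variationOnFromTo.add hα hx₀ hx hy
  dsimp only
  linarith

end Variation

namespace RDSPartition

variable {a b : ℝ} (P : RDSPartition a b)

def points : Finset ℝ := (Finset.range (P.n + 1)).image P.x

lemma strictMonoOn_x : StrictMonoOn P.x (Iic P.n) := strictMonoOn_Iic_of_lt_succ P.mono

lemma x_mem_Icc {i : ℕ} (hi : i ≤ P.n) : P.x i ∈ Icc a b := by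
  have h := P.strictMonoOn_x.monotoneOn
  refine ⟨?_, ?_⟩
  · simpa [P.first] using h (mem_Iic.2 (Nat.zero_le P.n)) (mem_Iic.2 hi) (Nat.zero_le i)
  · simpa [P.last] using h (mem_Iic.2 hi) (mem_Iic.2 le_rfl) hi

lemma mem_points {t : ℝ} : t ∈ P.points ↔ ∃ i ≤ P.n, P.x i = t := by
  simp [points]

lemma exists_mem_Ico {t : ℝ} (ht : t ∈ Ico a b) : ∃ i < P.n, t ∈ Ico (P.x i) (P.x (i + 1)) := by
  set i := Nat.findGreatest (fun i => P.x i ≤ t) P.n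
  have hxi : P.x i ≤ t :=
    Nat.findGreatest_spec (P := fun i => P.x i ≤ t) (Nat.zero_le P.n)
      (by simpa [P.first] using ht.1)
  have hin : i < P.n := (Nat.findGreatest_le P.n).lt_of_ne fun h => by
    have : P.x P.n ≤ t := h ▸ hxi
    exact ht.2.not_ge (P.last ▸ this)
  exact ⟨i, hin, hxi, lt_of_not_ge fun h => Nat.findGreatest_is_greatest (Nat.lt_succ_self i) hin h⟩

lemma x_notMem_Ioo {i j : ℕ} (hi : i < P.n) (hj : j ≤ P.n) : P.x j ∉ Ioo (P.x i) (P.x (i + 1)) := by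
  rintro ⟨h1, h2⟩
  have := (P.strictMonoOn_x.lt_iff_lt (mem_Iic.2 hi.le) (mem_Iic.2 hj)).1 h1
  have := (P.strictMonoOn_x.lt_iff_lt (mem_Iic.2 hj) (mem_Iic.2 hi)).1 h2
  omega

lemma Icc_eq_union : Icc a b = (⋃ i ∈ Finset.range (P.n + 1), {P.x i}) ∪
    ⋃ i ∈ Finset.range P.n, Ioo (P.x i) (P.x (i + 1)) := by
  refine Subset.antisymm (fun t ht => ?_) (union_subset ?_ ?_)
  · simp only [mem_union, mem_iUnion, Finset.mem_range, mem_singleton_iff, exists_prop]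
    rcases ht.2.eq_or_lt with rfl | htb
    · exact Or.inl ⟨P.n, P.n.lt_succ_self, P.last.symm⟩
    obtain ⟨i, hi, hti, hti'⟩ := P.exists_mem_Ico ⟨ht.1, htb⟩
    rcases hti.eq_or_lt with h | h
    · exact Or.inl ⟨i, by omega, h.symm⟩
    · exact Or.inr ⟨i, hi, h, hti'⟩
  · simp only [iUnion_subset_iff, singleton_subset_iff, Finset.mem_range]
    exact fun i hi => P.x_mem_Icc (by omega)
  · simp only [iUnion_subset_iff, Finset.mem_range]
    exact fun i hi => Ioo_subset_Icc_self.trans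
      (Icc_subset_Icc (P.x_mem_Icc hi.le).1 (P.x_mem_Icc hi).2)

lemma pairwiseDisjoint_singleton :
    (Finset.range (P.n + 1) : Set ℕ).PairwiseDisjoint fun i => ({P.x i} : Set ℝ) := by
  intro i hi j hj hij
  simp only [Finset.coe_range, mem_Iio, Nat.lt_succ_iff] at hi hj
  exact disjoint_singleton.2 fun h => hij (P.strictMonoOn_x.injOn hi hj h)

lemma disjoint_Ioo {i j : ℕ} (hij : i < j) (hj : j ≤ P.n) :
    Disjoint (Ioo (P.x i) (P.x (i + 1))) (Ioo (P.x j) (P.x (j + 1))) :=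
  (Iio_disjoint_Ici (P.strictMonoOn_x.monotoneOn (mem_Iic.2 (by omega)) (mem_Iic.2 hj) hij)).mono
    Ioo_subset_Iio_self (Ioo_subset_Ioi_self.trans Ioi_subset_Ici_self)

lemma pairwiseDisjoint_Ioo :
    (Finset.range P.n : Set ℕ).PairwiseDisjoint fun i => Ioo (P.x i) (P.x (i + 1)) := by
  intro i hi j hj hij
  simp only [Finset.coe_range, mem_Iio] at hi hj
  rcases hij.lt_or_gt with h | h
  · exact P.disjoint_Ioo h hj.le
  · exact (P.disjoint_Ioo h hi.le).symm

lemma disjoint_singleton_Ioo : Disjoint (⋃ i ∈ Finset.range (P.n + 1), ({P.x i} : Set ℝ))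
    (⋃ i ∈ Finset.range P.n, Ioo (P.x i) (P.x (i + 1))) := by
  simp only [disjoint_iUnion_left, disjoint_iUnion_right, disjoint_singleton_left, Finset.mem_range]
  exact fun i hi j hj => P.x_notMem_Ioo hi (by omega)

lemma mid_mem_Ioo {i : ℕ} (hi : i < P.n) :
    (P.x i + P.x (i + 1)) / 2 ∈ Ioo (P.x i) (P.x (i + 1)) :=
  ⟨by linarith [P.mono i hi], by linarith [P.mono i hi]⟩

def ofFinset (S : Finset ℝ) (hS : ∀ t ∈ S, t ∈ Icc a b) (ha : a ∈ S) (hb : b ∈ S) :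
    RDSPartition a b where
  n := S.card - 1
  x i := if h : i < S.card then S.orderEmbOfFin rfl ⟨i, h⟩ else b
  mono i hi := by
    simp only [dif_pos (show i < S.card by omega), dif_pos (show i + 1 < S.card by omega)]
    exact (S.orderEmbOfFin rfl).strictMono (Fin.mk_lt_mk.2 i.lt_succ_self)
  first := by
    have h0 : 0 < S.card := Finset.card_pos.2 ⟨a, ha⟩
    simp only [dif_pos h0, Finset.orderEmbOfFin_zero rfl h0]
    exact le_antisymm (S.min'_le a ha) (S.le_min' _ a fun t ht => (hS t ht).1)
  last := by
    have h0 : 0 < S.card := Finset.card_pos.2 ⟨a, ha⟩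
    simp only [dif_pos (Nat.sub_lt h0 one_pos), Finset.orderEmbOfFin_last rfl h0]
    exact le_antisymm (S.max'_le _ b fun t ht => (hS t ht).2) (S.le_max' b hb)

lemma subset_points_ofFinset (S : Finset ℝ) (hS : ∀ t ∈ S, t ∈ Icc a b) (ha : a ∈ S)
    (hb : b ∈ S) : S ⊆ (ofFinset S hS ha hb).points := by
  intro t ht
  obtain ⟨⟨i, hi⟩, rfl⟩ : t ∈ range (S.orderEmbOfFin rfl) := by simpa using ht
  exact (mem_points _).2 ⟨i, by simp only [ofFinset]; omega, by simp [ofFinset, hi]⟩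

lemma exists_points_subset (P Q : RDSPartition a b) :
    ∃ R : RDSPartition a b, P.points ⊆ R.points ∧ Q.points ⊆ R.points := by
  have hS : ∀ t ∈ P.points ∪ Q.points, t ∈ Icc a b := by
    simp only [Finset.mem_union, mem_points]
    rintro t (⟨i, hi, rfl⟩ | ⟨i, hi, rfl⟩)
    exacts [P.x_mem_Icc hi, Q.x_mem_Icc hi]
  have ha : a ∈ P.points ∪ Q.points :=
    Finset.mem_union_left _ ((mem_points _).2 ⟨0, Nat.zero_le _, P.first⟩)
  have hb : b ∈ P.points ∪ Q.points :=
    Finset.mem_union_left _ ((mem_points _).2 ⟨P.n, le_rfl, P.last⟩)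
  have h := subset_points_ofFinset _ hS ha hb
  exact ⟨_, Finset.subset_union_left.trans h, Finset.subset_union_right.trans h⟩

end RDSPartition

variable {a b : ℝ}

lemma IsStepOn.of_points_subset {P R : RDSPartition a b} {u : ℝ → ℝ}
    (hPR : P.points ⊆ R.points) (hu : IsStepOn a b u P) : IsStepOn a b u R := by
  intro j hj s hs
  obtain ⟨i, hi, hPi, hPi'⟩ := P.exists_mem_Ico (t := R.x j)
    ⟨(R.x_mem_Icc hj.le).1, (R.mono j hj).trans_le (R.x_mem_Icc hj).2⟩
  obtain ⟨m, hm, hRm⟩ := R.mem_points.1 (hPR (P.mem_points.2 ⟨i + 1, hi, rfl⟩))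
  have hjm : j < m := (R.strictMonoOn_x.lt_iff_lt (mem_Iic.2 hj.le) (mem_Iic.2 hm)).1 (hRm ▸ hPi')
  have hsub : Ioo (R.x j) (R.x (j + 1)) ⊆ Ioo (P.x i) (P.x (i + 1)) :=
    Ioo_subset_Ioo hPi (hRm ▸ R.strictMonoOn_x.monotoneOn (mem_Iic.2 hj) (mem_Iic.2 hm) hjm)
  rw [hu i hi s (hsub hs), hu i hi _ (hsub (R.mid_mem_Ioo hj))]

def IsStep (a b : ℝ) (u : ℝ → ℝ) : Prop := ∃ P : RDSPartition a b, IsStepOn a b u P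

lemma isStep_const (hab : a ≤ b) (c : ℝ) : IsStep a b fun _ => c :=
  ⟨.ofFinset {a, b} (by simp [hab]) (by simp) (by simp), fun _ _ _ _ => rfl⟩

lemma IsStep.comp {u : ℝ → ℝ} (φ : ℝ → ℝ) (hu : IsStep a b u) : IsStep a b fun t => φ (u t) := by
  obtain ⟨P, hP⟩ := hu
  exact ⟨P, fun i hi s hs => congrArg φ (hP i hi s hs)⟩

lemma IsStep.comp₂ {u v : ℝ → ℝ} (φ : ℝ → ℝ → ℝ) (hu : IsStep a b u) (hv : IsStep a b v) :
    IsStep a b fun t => φ (u t) (v t) := by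
  obtain ⟨P, hP⟩ := hu
  obtain ⟨Q, hQ⟩ := hv
  obtain ⟨R, hPR, hQR⟩ := P.exists_points_subset Q
  exact ⟨R, fun i hi s hs =>
    congrArg₂ φ (hP.of_points_subset hPR i hi s hs) (hQ.of_points_subset hQR i hi s hs)⟩

section StepIntegral

variable {μ : Measure ℝ} [IsFiniteMeasure μ] {P : RDSPartition a b} {u : ℝ → ℝ}

lemma IsStepOn.integrableOn_Ioo (hu : IsStepOn a b u P) {i : ℕ} (hi : i < P.n) :
    IntegrableOn u (Ioo (P.x i) (P.x (i + 1))) μ :=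
  IntegrableOn.congr_fun integrableOn_const (fun s hs => (hu i hi s hs).symm) measurableSet_Ioo

lemma IsStepOn.integrableOn (hu : IsStepOn a b u P) : IntegrableOn u (Icc a b) μ := by
  rw [P.Icc_eq_union]
  exact (integrableOn_finset_iUnion.2 fun i _ => integrableOn_singleton).union
    (integrableOn_finset_iUnion.2 fun i hi => hu.integrableOn_Ioo (Finset.mem_range.1 hi))

lemma IsStepOn.setIntegral_Icc (hu : IsStepOn a b u P) : ∫ t in Icc a b, u t ∂μ =
    (∑ i ∈ Finset.range (P.n + 1), u (P.x i) * μ.real {P.x i}) + ∑ i ∈ Finset.range P.n,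
      u ((P.x i + P.x (i + 1)) / 2) * μ.real (Ioo (P.x i) (P.x (i + 1))) := by
  have hpts : ∀ i ∈ Finset.range (P.n + 1), IntegrableOn u {P.x i} μ :=
    fun i _ => integrableOn_singleton
  have hIoo : ∀ i ∈ Finset.range P.n, IntegrableOn u (Ioo (P.x i) (P.x (i + 1))) μ :=
    fun i hi => hu.integrableOn_Ioo (Finset.mem_range.1 hi)
  rw [P.Icc_eq_union, setIntegral_union P.disjoint_singleton_Ioo
      (Finset.measurableSet_biUnion _ fun _ _ => measurableSet_Ioo)
      (integrableOn_finset_iUnion.2 hpts) (integrableOn_finset_iUnion.2 hIoo),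
    integral_biUnion_finset _ (fun _ _ => measurableSet_singleton _) P.pairwiseDisjoint_singleton
      hpts,
    integral_biUnion_finset _ (fun _ _ => measurableSet_Ioo) P.pairwiseDisjoint_Ioo hIoo]
  congr 1 <;> refine Finset.sum_congr rfl fun i hi => ?_
  · rw [integral_singleton, smul_eq_mul, mul_comm]
  · rw [setIntegral_congr_fun measurableSet_Ioo (hu i (Finset.mem_range.1 hi)), setIntegral_const,
      smul_eq_mul, mul_comm]

end StepIntegral

section RDSMeasure

variable {γ : ℝ → ℝ} (hab : a ≤ b) (hγ : MonotoneOn γ (Icc a b))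

def stieltjesOn : StieltjesFunction ℝ :=
  ((monotoneOn_iff_monotone.1 hγ).IccExtend hab).stieltjesFunction

/-- Freezing `γ` outside `[a, b]` and restricting to `[a, b]` gives the atoms at `a` and `b` the
masses `γ(a+) - γ(a)` and `γ(b) - γ(b-)`, matching the endpoint conventions of `lLim` and `rLim`. -/
def rdsMeasure : Measure ℝ := (stieltjesOn hab hγ).measure.restrict (Icc a b)

instance : IsFiniteMeasure (rdsMeasure hab hγ) :=
  isFiniteMeasure_restrict.2 measure_Icc_lt_top.ne

lemma rdsMeasure_restrict_Icc : (rdsMeasure hab hγ).restrict (Icc a b) = rdsMeasure hab hγ := by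
  rw [rdsMeasure, Measure.restrict_restrict measurableSet_Icc, inter_self]

lemma stieltjesOn_eq_rLim {t : ℝ} (ht : t ∈ Icc a b) : stieltjesOn hab hγ t = rLim b γ t := by
  have hF := (monotoneOn_iff_monotone.1 hγ).IccExtend hab
  show Function.rightLim _ t = _
  rw [rLim]
  split_ifs with htb
  · refine (rightLim_eq_of_tendsto ((hF.tendsto_rightLim t).congr' ?_)).symm
    filter_upwards [Ioo_mem_nhdsGT htb] with s hs
    exact IccExtend_of_mem hab _ ⟨ht.1.trans hs.1.le, hs.2.le⟩
  · obtain rfl : t = b := le_antisymm ht.2 (not_lt.1 htb)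
    refine rightLim_eq_of_tendsto (tendsto_const_nhds.congr' ?_)
    filter_upwards [self_mem_nhdsWithin] with s hs
    exact (IccExtend_of_right_le hab (fun x : Icc _ _ => γ x) (le_of_lt hs)).symm

lemma leftLim_stieltjesOn_eq_lLim {t : ℝ} (ht : t ∈ Icc a b) :
    Function.leftLim (stieltjesOn hab hγ) t = lLim a γ t := by
  have hF := (monotoneOn_iff_monotone.1 hγ).IccExtend hab
  show Function.leftLim (Function.rightLim _) t = _
  rw [leftLim_rightLim (hF.tendsto_leftLim t), lLim]
  split_ifs with hat
  · refine (leftLim_eq_of_tendsto ((hF.tendsto_leftLim t).congr' ?_)).symm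
    filter_upwards [Ioo_mem_nhdsLT hat] with s hs
    exact IccExtend_of_mem hab _ ⟨hs.1.le, hs.2.le.trans ht.2⟩
  · obtain rfl : t = a := le_antisymm (not_lt.1 hat) ht.1
    refine leftLim_eq_of_tendsto (tendsto_const_nhds.congr' ?_)
    filter_upwards [self_mem_nhdsWithin] with s hs
    exact (IccExtend_of_le_left hab (fun x : Icc _ _ => γ x) (le_of_lt hs)).symm

lemma rdsMeasure_real_singleton {t : ℝ} (ht : t ∈ Icc a b) :
    (rdsMeasure hab hγ).real {t} = muPt a b γ t := by
  rw [measureReal_def, rdsMeasure, Measure.restrict_apply (measurableSet_singleton t),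
    singleton_inter_of_mem ht, StieltjesFunction.measure_singleton,
    ENNReal.toReal_ofReal (sub_nonneg.2 ((stieltjesOn hab hγ).mono.leftLim_le le_rfl)),
    stieltjesOn_eq_rLim hab hγ ht, leftLim_stieltjesOn_eq_lLim hab hγ ht, muPt]

lemma rdsMeasure_real_Ioo {c d : ℝ} (hc : a ≤ c) (hcd : c < d) (hd : d ≤ b) :
    (rdsMeasure hab hγ).real (Ioo c d) = muIoo a b γ c d := by
  rw [measureReal_def, rdsMeasure, Measure.restrict_apply measurableSet_Ioo,
    inter_eq_left.2 (Ioo_subset_Icc_self.trans (Icc_subset_Icc hc hd)),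
    StieltjesFunction.measure_Ioo,
    ENNReal.toReal_ofReal (sub_nonneg.2 ((stieltjesOn hab hγ).mono.le_leftLim hcd)),
    stieltjesOn_eq_rLim hab hγ ⟨hc, hcd.le.trans hd⟩,
    leftLim_stieltjesOn_eq_lLim hab hγ ⟨hc.trans hcd.le, hd⟩, muIoo]

lemma rdsMeasure_real_univ : (rdsMeasure hab hγ).real univ = γ b - γ a := by
  have hb := stieltjesOn_eq_rLim hab hγ (right_mem_Icc.2 hab)
  have ha := leftLim_stieltjesOn_eq_lLim hab hγ (left_mem_Icc.2 hab)
  rw [rLim, if_neg (lt_irrefl b)] at hb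
  rw [lLim, if_neg (lt_irrefl a)] at ha
  rw [measureReal_def, rdsMeasure, Measure.restrict_apply_univ, StieltjesFunction.measure_Icc,
    hb, ha, ENNReal.toReal_ofReal
      (sub_nonneg.2 (hγ (left_mem_Icc.2 hab) (right_mem_Icc.2 hab) hab))]

lemma rdsMeasure_eq_add {γ₁ γ₂ : ℝ → ℝ} (hγ₁ : MonotoneOn γ₁ (Icc a b))
    (hγ₂ : MonotoneOn γ₂ (Icc a b)) (h : ∀ t ∈ Icc a b, γ t = γ₁ t + γ₂ t) :
    rdsMeasure hab hγ = rdsMeasure hab hγ₁ + rdsMeasure hab hγ₂ := by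
  have hF₁ := (monotoneOn_iff_monotone.1 hγ₁).IccExtend hab
  have hF₂ := (monotoneOn_iff_monotone.1 hγ₂).IccExtend hab
  have hsum : stieltjesOn hab hγ = stieltjesOn hab hγ₁ + stieltjesOn hab hγ₂ := by
    ext t
    show Function.rightLim _ t = Function.rightLim _ t + Function.rightLim _ t
    refine rightLim_eq_of_tendsto (((hF₁.tendsto_rightLim t).add (hF₂.tendsto_rightLim t)).congr
      fun s => ?_)
    simp only [IccExtend_apply]
    exact (h _ ⟨le_max_left _ _, max_le hab (min_le_left _ _)⟩).symm
  rw [rdsMeasure, hsum, StieltjesFunction.measure_add, Measure.restrict_add, rdsMeasure, rdsMeasure]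

lemma rdsMeasure_mono {δ : ℝ → ℝ} (hδ : MonotoneOn δ (Icc a b))
    (h : MonotoneOn (fun t => γ t - δ t) (Icc a b)) : rdsMeasure hab hδ ≤ rdsMeasure hab hγ := by
  rw [rdsMeasure_eq_add hab hγ hδ h fun t _ => by ring]
  exact Measure.le_add_right le_rfl

lemma stepInt_eq_integral {P : RDSPartition a b} {u : ℝ → ℝ} (hu : IsStepOn a b u P) :
    stepInt a b γ P u = ∫ t, u t ∂rdsMeasure hab hγ := by
  rw [← rdsMeasure_restrict_Icc, hu.setIntegral_Icc, stepInt]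
  congr 1 <;> refine Finset.sum_congr rfl fun i hi => ?_
  · rw [rdsMeasure_real_singleton hab hγ (P.x_mem_Icc (Nat.lt_succ_iff.1 (Finset.mem_range.1 hi)))]
  · have hi := Finset.mem_range.1 hi
    rw [rdsMeasure_real_Ioo hab hγ (P.x_mem_Icc hi.le).1 (P.mono i hi) (P.x_mem_Icc hi).2]

lemma IsStep.integrable {u : ℝ → ℝ} (hu : IsStep a b u) : Integrable u (rdsMeasure hab hγ) := by
  obtain ⟨P, hP⟩ := hu
  rw [← rdsMeasure_restrict_Icc]
  exact hP.integrableOn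

end RDSMeasure

section Envelopes

variable {γ f : ℝ → ℝ}

def stepAbove (a b : ℝ) (f : ℝ → ℝ) : Set (ℝ → ℝ) := {u | IsStep a b u ∧ ∀ t ∈ Icc a b, f t ≤ u t}

def stepBelow (a b : ℝ) (f : ℝ → ℝ) : Set (ℝ → ℝ) := {v | IsStep a b v ∧ ∀ t ∈ Icc a b, v t ≤ f t}

lemma BddOn.nonempty_stepAbove (hab : a ≤ b) (hf : BddOn a b f) : Nonempty (stepAbove a b f) := by
  obtain ⟨M, hM⟩ := hf
  exact ⟨⟨fun _ => M, isStep_const hab M, fun t ht => (abs_le.1 (hM t ht)).2⟩⟩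

lemma BddOn.nonempty_stepBelow (hab : a ≤ b) (hf : BddOn a b f) : Nonempty (stepBelow a b f) := by
  obtain ⟨M, hM⟩ := hf
  exact ⟨⟨fun _ => -M, isStep_const hab (-M), fun t ht => (abs_le.1 (hM t ht)).1⟩⟩

variable (hab : a ≤ b) (hγ : MonotoneOn γ (Icc a b))

lemma upperRDS_eq_iInf :
    upperRDS a b γ f = ⨅ u : stepAbove a b f, ∫ t, (u : ℝ → ℝ) t ∂rdsMeasure hab hγ := by
  refine congrArg sInf (Set.ext fun r => ⟨?_, ?_⟩)
  · rintro ⟨u, P, hP, hfu, rfl⟩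
    exact ⟨⟨u, ⟨P, hP⟩, hfu⟩, (stepInt_eq_integral hab hγ hP).symm⟩
  · rintro ⟨⟨u, ⟨P, hP⟩, hfu⟩, rfl⟩
    exact ⟨u, P, hP, hfu, (stepInt_eq_integral hab hγ hP).symm⟩

lemma lowerRDS_eq_iSup :
    lowerRDS a b γ f = ⨆ v : stepBelow a b f, ∫ t, (v : ℝ → ℝ) t ∂rdsMeasure hab hγ := by
  refine congrArg sSup (Set.ext fun r => ⟨?_, ?_⟩)
  · rintro ⟨v, P, hP, hvf, rfl⟩
    exact ⟨⟨v, ⟨P, hP⟩, hvf⟩, (stepInt_eq_integral hab hγ hP).symm⟩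
  · rintro ⟨⟨v, ⟨P, hP⟩, hvf⟩, rfl⟩
    exact ⟨v, P, hP, hvf, (stepInt_eq_integral hab hγ hP).symm⟩

lemma integral_rdsMeasure_mono {u w : ℝ → ℝ} (hu : Integrable u (rdsMeasure hab hγ))
    (hw : Integrable w (rdsMeasure hab hγ)) (h : ∀ t ∈ Icc a b, u t ≤ w t) :
    ∫ t, u t ∂rdsMeasure hab hγ ≤ ∫ t, w t ∂rdsMeasure hab hγ :=
  integral_mono_ae hu hw (ae_restrict_of_forall_mem measurableSet_Icc h)

lemma integral_le_integral_stepAbove (hfi : Integrable f (rdsMeasure hab hγ))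
    (u : stepAbove a b f) : ∫ t, f t ∂rdsMeasure hab hγ ≤ ∫ t, (u : ℝ → ℝ) t ∂rdsMeasure hab hγ :=
  integral_rdsMeasure_mono hab hγ hfi (u.2.1.integrable hab hγ) u.2.2

lemma integral_stepBelow_le_integral (hfi : Integrable f (rdsMeasure hab hγ))
    (v : stepBelow a b f) : ∫ t, (v : ℝ → ℝ) t ∂rdsMeasure hab hγ ≤ ∫ t, f t ∂rdsMeasure hab hγ :=
  integral_rdsMeasure_mono hab hγ (v.2.1.integrable hab hγ) hfi v.2.2

lemma integral_stepBelow_le_integral_stepAbove (v : stepBelow a b f) (u : stepAbove a b f) :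
    ∫ t, (v : ℝ → ℝ) t ∂rdsMeasure hab hγ ≤ ∫ t, (u : ℝ → ℝ) t ∂rdsMeasure hab hγ :=
  integral_rdsMeasure_mono hab hγ (v.2.1.integrable hab hγ) (u.2.1.integrable hab hγ)
    fun t ht => (v.2.2 t ht).trans (u.2.2 t ht)

theorem rdsIntegrableInc_iff (hf : BddOn a b f) :
    RDSIntegrableInc a b γ f ↔ ∀ ε > 0, ∃ u v : ℝ → ℝ, IsStep a b u ∧ IsStep a b v ∧
      (∀ t ∈ Icc a b, v t ≤ f t ∧ f t ≤ u t) ∧ ∫ t, (u t - v t) ∂rdsMeasure hab hγ < ε := by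
  have := hf.nonempty_stepAbove hab
  have := hf.nonempty_stepBelow hab
  have hle := integral_stepBelow_le_integral_stepAbove hab hγ (f := f)
  have hUb : BddBelow (range fun u : stepAbove a b f => ∫ t, (u : ℝ → ℝ) t ∂rdsMeasure hab hγ) :=
    ⟨_, forall_mem_range.2 (hle (Classical.arbitrary _))⟩
  have hLb : BddAbove (range fun v : stepBelow a b f => ∫ t, (v : ℝ → ℝ) t ∂rdsMeasure hab hγ) :=
    ⟨_, forall_mem_range.2 fun v => hle v (Classical.arbitrary _)⟩
  have hsub : ∀ u v : ℝ → ℝ, IsStep a b u → IsStep a b v → ∫ t, (u t - v t) ∂rdsMeasure hab hγ =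
      ∫ t, u t ∂rdsMeasure hab hγ - ∫ t, v t ∂rdsMeasure hab hγ :=
    fun u v hu hv => integral_sub (hu.integrable hab hγ) (hv.integrable hab hγ)
  rw [RDSIntegrableInc, upperRDS_eq_iInf hab hγ, lowerRDS_eq_iSup hab hγ]
  constructor
  · intro heq ε hε
    obtain ⟨u, hu⟩ := exists_lt_of_ciInf_lt (lt_add_of_pos_right (⨅ u : stepAbove a b f,
      ∫ t, (u : ℝ → ℝ) t ∂rdsMeasure hab hγ) (half_pos hε))
    obtain ⟨v, hv⟩ := exists_lt_of_lt_ciSup (sub_lt_self (⨆ v : stepBelow a b f,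
      ∫ t, (v : ℝ → ℝ) t ∂rdsMeasure hab hγ) (half_pos hε))
    refine ⟨u, v, u.2.1, v.2.1, fun t ht => ⟨v.2.2 t ht, u.2.2 t ht⟩, ?_⟩
    rw [hsub _ _ u.2.1 v.2.1]
    linarith
  · intro h
    refine le_antisymm (ciSup_le fun v => le_ciInf (hle v)) (le_of_forall_pos_lt_add fun ε hε => ?_)
    obtain ⟨u, v, hu, hv, hvfu, hlt⟩ := h ε hε
    have h₁ := ciInf_le hUb ⟨u, hu, fun t ht => (hvfu t ht).2⟩
    have h₂ := le_ciSup hLb ⟨v, hv, fun t ht => (hvfu t ht).1⟩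
    rw [hsub u v hu hv] at hlt
    linarith

lemma RDSIntegrableInc.integrable (hf : BddOn a b f) (h : RDSIntegrableInc a b γ f) :
    Integrable f (rdsMeasure hab hγ) := by
  refine integrable_of_forall_exists_between fun ε hε => ?_
  obtain ⟨u, v, hu, hv, hvfu, hlt⟩ := (rdsIntegrableInc_iff hab hγ hf).1 h ε hε
  exact ⟨u, v, hu.integrable hab hγ, hv.integrable hab hγ,
    ae_restrict_of_forall_mem measurableSet_Icc fun t ht => (hvfu t ht).1,
    ae_restrict_of_forall_mem measurableSet_Icc fun t ht => (hvfu t ht).2, hlt⟩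

lemma RDSIntegrableInc.rdsIntegralInc_eq_integral (hf : BddOn a b f)
    (h : RDSIntegrableInc a b γ f) : RDSIntegralInc a b γ f = ∫ t, f t ∂rdsMeasure hab hγ := by
  have := hf.nonempty_stepAbove hab
  have := hf.nonempty_stepBelow hab
  have hfi := h.integrable hab hγ hf
  rw [RDSIntegralInc]
  refine le_antisymm ?_
    (upperRDS_eq_iInf hab hγ ▸ le_ciInf (integral_le_integral_stepAbove hab hγ hfi))
  rw [← h, lowerRDS_eq_iSup hab hγ]
  exact ciSup_le (integral_stepBelow_le_integral hab hγ hfi)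

end Envelopes

section IncreasingIntegrator

variable {γ f : ℝ → ℝ}

theorem RDSIntegrableInc.of_monotoneOn_add_sub {δ γ₁ γ₂ : ℝ → ℝ} (hab : a ≤ b)
    (hδ : MonotoneOn δ (Icc a b)) (hγ₁ : MonotoneOn γ₁ (Icc a b)) (hγ₂ : MonotoneOn γ₂ (Icc a b))
    (hdom : MonotoneOn (fun t => γ₁ t + γ₂ t - δ t) (Icc a b)) (hf : BddOn a b f)
    (h₁ : RDSIntegrableInc a b γ₁ f) (h₂ : RDSIntegrableInc a b γ₂ f) :
    RDSIntegrableInc a b δ f := by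
  refine (rdsIntegrableInc_iff hab hδ hf).2 fun ε hε => ?_
  obtain ⟨u₁, v₁, hu₁, hv₁, hf₁, hlt₁⟩ :=
    (rdsIntegrableInc_iff hab hγ₁ hf).1 h₁ (ε / 2) (half_pos hε)
  obtain ⟨u₂, v₂, hu₂, hv₂, hf₂, hlt₂⟩ :=
    (rdsIntegrableInc_iff hab hγ₂ hf).1 h₂ (ε / 2) (half_pos hε)
  have hu := hu₁.comp₂ min hu₂
  have hv := hv₁.comp₂ max hv₂
  have hvu : ∀ t ∈ Icc a b, max (v₁ t) (v₂ t) ≤ f t ∧ f t ≤ min (u₁ t) (u₂ t) :=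
    fun t ht => ⟨max_le (hf₁ t ht).1 (hf₂ t ht).1, le_min (hf₁ t ht).2 (hf₂ t ht).2⟩
  refine ⟨_, _, hu, hv, hvu, ?_⟩
  set w := fun t => min (u₁ t) (u₂ t) - max (v₁ t) (v₂ t)
  have hγ := hγ₁.add hγ₂
  have hw {η : ℝ → ℝ} (hη : MonotoneOn η (Icc a b)) : Integrable w (rdsMeasure hab hη) :=
    (hu.integrable hab hη).sub (hv.integrable hab hη)
  calc ∫ t, w t ∂rdsMeasure hab hδ
      ≤ ∫ t, w t ∂rdsMeasure hab hγ :=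
        integral_mono_measure (rdsMeasure_mono hab hγ hδ hdom)
          (ae_restrict_of_forall_mem measurableSet_Icc fun t ht =>
            sub_nonneg.2 ((hvu t ht).1.trans (hvu t ht).2)) (hw hγ)
    _ = ∫ t, w t ∂rdsMeasure hab hγ₁ + ∫ t, w t ∂rdsMeasure hab hγ₂ := by
        rw [rdsMeasure_eq_add hab hγ hγ₁ hγ₂ fun _ _ => rfl, integral_add_measure (hw hγ₁) (hw hγ₂)]
    _ ≤ ∫ t, (u₁ t - v₁ t) ∂rdsMeasure hab hγ₁ + ∫ t, (u₂ t - v₂ t) ∂rdsMeasure hab hγ₂ :=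
        add_le_add
          (integral_rdsMeasure_mono hab hγ₁ (hw hγ₁)
            ((hu₁.integrable hab hγ₁).sub (hv₁.integrable hab hγ₁))
            fun t _ => sub_le_sub (min_le_left _ _) (le_max_left _ _))
          (integral_rdsMeasure_mono hab hγ₂ (hw hγ₂)
            ((hu₂.integrable hab hγ₂).sub (hv₂.integrable hab hγ₂))
            fun t _ => sub_le_sub (min_le_right _ _) (le_max_right _ _))
    _ < ε := by linarith

lemma BddOn.of_tendstoUniformlyOn {F : ℕ → ℝ → ℝ} {g : ℝ → ℝ} (hF : ∀ n, BddOn a b (F n))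
    (h : TendstoUniformlyOn F g atTop (Icc a b)) : BddOn a b g := by
  obtain ⟨n, hn⟩ := (Metric.tendstoUniformlyOn_iff.1 h 1 one_pos).exists
  obtain ⟨M, hM⟩ := hF n
  refine ⟨M + 1, fun t ht => ?_⟩
  have := hn t ht
  rw [Real.dist_eq] at this
  linarith [abs_sub_abs_le_abs_sub (g t) (F n t), hM t ht]

theorem RDSIntegrableInc.of_tendstoUniformlyOn {F : ℕ → ℝ → ℝ} {g : ℝ → ℝ} (hab : a ≤ b)
    (hγ : MonotoneOn γ (Icc a b)) (hF : ∀ n, BddOn a b (F n))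
    (hFi : ∀ n, RDSIntegrableInc a b γ (F n))
    (h : TendstoUniformlyOn F g atTop (Icc a b)) : RDSIntegrableInc a b γ g := by
  refine (rdsIntegrableInc_iff hab hγ (.of_tendstoUniformlyOn hF h)).2 fun ε hε => ?_
  have hC : 0 ≤ γ b - γ a := sub_nonneg.2 (hγ (left_mem_Icc.2 hab) (right_mem_Icc.2 hab) hab)
  set η := ε / (2 * (γ b - γ a) + 2)
  have hη : 0 < η := div_pos hε (by linarith)
  obtain ⟨n, hn⟩ := (Metric.tendstoUniformlyOn_iff.1 h η hη).exists
  obtain ⟨u, v, hu, hv, hvu, hlt⟩ := (rdsIntegrableInc_iff hab hγ (hF n)).1 (hFi n) η hη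
  refine ⟨fun t => u t + η, fun t => v t - η, hu.comp (· + η), hv.comp (· - η), fun t ht => ?_, ?_⟩
  · have := abs_sub_lt_iff.1 (hn t ht)
    constructor <;> linarith [hvu t ht]
  calc ∫ t, (u t + η - (v t - η)) ∂rdsMeasure hab hγ
      = ∫ t, (u t - v t) ∂rdsMeasure hab hγ + (γ b - γ a) * (2 * η) := by
        simp_rw [show ∀ t, u t + η - (v t - η) = u t - v t + 2 * η from fun t => by ring]
        rw [integral_add (f := fun t => u t - v t)
          ((hu.integrable hab hγ).sub (hv.integrable hab hγ)) (integrable_const _),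
          integral_const, smul_eq_mul, rdsMeasure_real_univ hab hγ]
    _ < η + (γ b - γ a) * (2 * η) := by linarith
    _ ≤ ε := by
        rw [show η + (γ b - γ a) * (2 * η) = η * (2 * (γ b - γ a) + 2) - η by ring,
          div_mul_cancel₀ _ (by linarith)]
        linarith

theorem tendsto_rdsIntegralInc_of_tendstoUniformlyOn {F : ℕ → ℝ → ℝ} {g : ℝ → ℝ} (hab : a ≤ b)
    (hγ : MonotoneOn γ (Icc a b)) (hF : ∀ n, BddOn a b (F n))
    (hFi : ∀ n, RDSIntegrableInc a b γ (F n))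
    (h : TendstoUniformlyOn F g atTop (Icc a b)) :
    Tendsto (fun n => RDSIntegralInc a b γ (F n)) atTop (𝓝 (RDSIntegralInc a b γ g)) := by
  have hval : ∀ φ, RDSIntegrableInc a b γ φ → BddOn a b φ →
      RDSIntegralInc a b γ φ = ∫ t in Icc a b, φ t ∂rdsMeasure hab hγ := fun φ hφ hφb => by
    rw [hφ.rdsIntegralInc_eq_integral hab hγ hφb, rdsMeasure_restrict_Icc]
  rw [hval g (.of_tendstoUniformlyOn hab hγ hF hFi h) (.of_tendstoUniformlyOn hF h)]
  exact (h.tendsto_setIntegral measurableSet_Icc fun n =>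
    ((hFi n).integrable hab hγ (hF n)).integrableOn).congr fun n => (hval _ (hFi n) (hF n)).symm

end IncreasingIntegrator

section BoundedVariationIntegrator

variable {α f : ℝ → ℝ}

theorem RDSIntegrable.rdsIntegrableInc_variationOnFromTo (hab : a ≤ b)
    (hα : LocallyBoundedVariationOn α (Icc a b)) (hf : BddOn a b f) (h : RDSIntegrable a b α f) :
    RDSIntegrableInc a b (variationOnFromTo α (Icc a b) a) f ∧
      RDSIntegrableInc a b (variationOnFromTo α (Icc a b) a - α) f := by
  obtain ⟨u, v, hu, hv, heq, hiu, hiv⟩ := h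
  have ha : a ∈ Icc a b := left_mem_Icc.2 hab
  have hdom := monotoneOn_add_sub_variationOnFromTo hα ha hu hv heq
  refine ⟨hiu.of_monotoneOn_add_sub hab (variationOnFromTo.monotoneOn hα ha) hu hv hdom hf hiv,
    hiv.of_monotoneOn_add_sub hab (variationOnFromTo.sub_self_monotoneOn hα ha) hv hv
      (hdom.congr fun t ht => ?_) hf hiv⟩
  -- with `V` the variation of `α` from `a`: `v + v - (V - α) = u + v - V` on `[a, b]`
  simp only [Pi.sub_apply, heq t ht]
  ring

theorem rdsIntegral_eq_rdsIntegralInc_sub {u v : ℝ → ℝ} (hab : a ≤ b) (hu : MonotoneOn u (Icc a b))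
    (hv : MonotoneOn v (Icc a b)) (heq : ∀ t ∈ Icc a b, α t = u t - v t) (hf : BddOn a b f)
    (hiu : RDSIntegrableInc a b u f) (hiv : RDSIntegrableInc a b v f) :
    RDSIntegral a b α f = RDSIntegralInc a b u f - RDSIntegralInc a b v f := by
  have h : RDSIntegrable a b α f := ⟨u, v, hu, hv, heq, hiu, hiv⟩
  obtain ⟨hu', hv', heq', hiu', hiv'⟩ := h.choose_spec.choose_spec
  rw [RDSIntegral, dif_pos h, hiu.rdsIntegralInc_eq_integral hab hu hf,
    hiv.rdsIntegralInc_eq_integral hab hv hf, hiu'.rdsIntegralInc_eq_integral hab hu' hf,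
    hiv'.rdsIntegralInc_eq_integral hab hv' hf]
  have hsum : rdsMeasure hab hu' + rdsMeasure hab hv = rdsMeasure hab hu + rdsMeasure hab hv' := by
    rw [← rdsMeasure_eq_add hab (hu.add hv') hu' hv fun t ht => by linarith [heq t ht, heq' t ht],
      rdsMeasure_eq_add hab (hu.add hv') hu hv' fun _ _ => rfl]
  have := congrArg (fun μ => ∫ t, f t ∂μ) hsum
  simp only [integral_add_measure (hiu'.integrable hab hu' hf) (hiv.integrable hab hv hf),
    integral_add_measure (hiu.integrable hab hu hf) (hiv'.integrable hab hv' hf)] at this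
  linarith

end BoundedVariationIntegrator

end

theorem stmt13 (a b : ℝ) (hab : a < b) (α : ℝ → ℝ)
    (hα : BoundedVariationOn α (Set.Icc a b)) (f : ℕ → ℝ → ℝ) (g : ℝ → ℝ)
    (hfb : ∀ k, BddOn a b (f k))
    (hfi : ∀ k, RDSIntegrable a b α (f k))
    (hconv : TendstoUniformlyOn f g atTop (Set.Icc a b)) :
    RDSIntegrable a b α g ∧
    Tendsto (fun k => RDSIntegral a b α (f k)) atTop (𝓝 (RDSIntegral a b α g)) := by
  have hα' := hα.locallyBoundedVariationOn
  have ha : a ∈ Icc a b := left_mem_Icc.2 hab.le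
  set V := variationOnFromTo α (Icc a b) a
  have hV : MonotoneOn V (Icc a b) := variationOnFromTo.monotoneOn hα' ha
  have hVα : MonotoneOn (V - α) (Icc a b) := variationOnFromTo.sub_self_monotoneOn hα' ha
  have hαV : ∀ t ∈ Icc a b, α t = V t - (V - α) t := fun t _ => by simp
  have hfV k := (hfi k).rdsIntegrableInc_variationOnFromTo hab.le hα' (hfb k)
  have hgV := RDSIntegrableInc.of_tendstoUniformlyOn hab.le hV hfb (fun k => (hfV k).1) hconv
  have hgVα := RDSIntegrableInc.of_tendstoUniformlyOn hab.le hVα hfb (fun k => (hfV k).2) hconv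
  refine ⟨⟨V, V - α, hV, hVα, hαV, hgV, hgVα⟩, ?_⟩
  rw [rdsIntegral_eq_rdsIntegralInc_sub hab.le hV hVα hαV (.of_tendstoUniformlyOn hfb hconv)
    hgV hgVα]
  have hV_lim :=
    tendsto_rdsIntegralInc_of_tendstoUniformlyOn hab.le hV hfb (fun k => (hfV k).1) hconv
  have hVα_lim :=
    tendsto_rdsIntegralInc_of_tendstoUniformlyOn hab.le hVα hfb (fun k => (hfV k).2) hconv
  refine (hV_lim.sub hVα_lim).congr fun k => ?_
  exact (rdsIntegral_eq_rdsIntegralInc_sub hab.le hV hVα hαV (hfb k) (hfV k).1 (hfV k).2).symm
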